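/- (Proposition 5, alternative Nash equilibrium under generalized uniform pricing) Let 𝓘^γ be a nonempty proper subset of the suppliers {1, …, I}. Suppose: every i ∈ 𝓘^γ bids price pᵢ* = 0 and quantity qᵢ* > 0 with ∑_{i∈𝓘^γ} qᵢ* = D; every supplier k ∉ 𝓘^γ bids price p_k* ∈ (0, p̄] and quantity q_k* > 0; j ∈ argmin_{k ∉ 𝓘^γ} p_k*; and for every i ∈ 𝓘^γ, qᵢ* ≤ yᵢ*(p_j*) and qᵢ* ≤ q_j*. Then this bid profile is a pure Nash equilibrium of the generalized uniform-pricing game with clearing price π* = p_j*: each i ∈ 𝓘^γ earns Rᵢ(qᵢ*; p_j*), each k ∉ 𝓘^γ earns 0, and no supplier can strictly increase its payoff by a unilateral deviation (p', q') ∈ [0, p̄] × [0, ∞), for any merit-order-optimal allocation and clearing price determined by the pricing rule after the deviation. -/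

import Mathlib

open MeasureTheory Set

/-- The cumulative distribution function `F(t) = P(X ≤ t)` of a random variable `X`. -/
noncomputable def cdfOf {Ω : Type*} [MeasurableSpace Ω] (μ : Measure Ω) (X : Ω → ℝ) (t : ℝ) : ℝ :=
  (μ {ω | X ω ≤ t}).toReal

/-- The generalized inverse `F⁻¹(u) = inf {t ≥ 0 : F(t) ≥ u}`. -/
noncomputable def geninv (F : ℝ → ℝ) (u : ℝ) : ℝ :=
  sInf {t : ℝ | 0 ≤ t ∧ u ≤ F t}

/-- The optimal commitment function `y*(π) = F⁻¹(min(π/λ, 1))`. -/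
noncomputable def ystar (F : ℝ → ℝ) (lam : ℝ) (pr : ℝ) : ℝ :=
  geninv F (min (pr / lam) 1)

/-- The expected profit `R(x; π) = x·π − λ·E[(x − X)⁺]` of a supplier paid day-ahead
price `π` for committed quantity `x`, with real-time penalty price `λ`. -/
noncomputable def profit {Ω : Type*} [MeasurableSpace Ω] (μ : Measure Ω) (X : Ω → ℝ)
    (lam : ℝ) (pr : ℝ) (x : ℝ) : ℝ :=
  x * pr - lam * ∫ ω, max (x - X ω) 0 ∂μ

/-- Extend a quantity/price/allocation vector over the suppliers `Fin I` to the index set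
`Option (Fin I)`, where `none` stands for the system operator (supplier `0`), whose value
is `a0`. -/
def extOp {I : ℕ} (a0 : ℝ) (a : Fin I → ℝ) : Option (Fin I) → ℝ :=
  fun j => j.elim a0 a

/-- Merit-order-optimal allocation: the operator is supplier `0` with bid price `p̄` and
quantity `D`; the allocation `(x₀, x)` is feasible and maximizes
`∑_{i=0}^{I} (p̄ − pᵢ)·xᵢ` subject to `∑_{i=0}^{I} xᵢ = D` and `0 ≤ xᵢ ≤ qᵢ`. -/
def MeritOpt {I : ℕ} (pbar D : ℝ) (p q : Fin I → ℝ) (x0 : ℝ) (x : Fin I → ℝ) : Prop :=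
  (0 ≤ x0 ∧ x0 ≤ D ∧ (∀ i, 0 ≤ x i ∧ x i ≤ q i) ∧ x0 + ∑ i, x i = D) ∧
  ∀ (y0 : ℝ) (y : Fin I → ℝ),
    0 ≤ y0 → y0 ≤ D → (∀ i, 0 ≤ y i ∧ y i ≤ q i) → y0 + ∑ i, y i = D →
    (pbar - pbar) * y0 + ∑ i, (pbar - p i) * y i
      ≤ (pbar - pbar) * x0 + ∑ i, (pbar - p i) * x i

/-- The clearing price rule: let `P` be the maximum bid price among indices (including the
operator, with bid price `p̄` and quantity `D`) with `xᵢ > 0`; if some index `i` with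
`pᵢ = P` and `xᵢ > 0` has `xᵢ < qᵢ`, the clearing price is `P`; otherwise it is the
minimum bid price among indices (including the operator) with `xᵢ = 0`. -/
def IsClearingPrice {I : ℕ} (pbar D : ℝ) (p q : Fin I → ℝ) (x0 : ℝ) (x : Fin I → ℝ)
    (c : ℝ) : Prop :=
  (∃ i : Option (Fin I), 0 < extOp x0 x i ∧ extOp x0 x i < extOp D q i ∧
      (∀ k : Option (Fin I), 0 < extOp x0 x k → extOp pbar p k ≤ extOp pbar p i) ∧
      c = extOp pbar p i) ∨
  ((¬ ∃ i : Option (Fin I), 0 < extOp x0 x i ∧ extOp x0 x i < extOp D q i ∧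
      (∀ k : Option (Fin I), 0 < extOp x0 x k → extOp pbar p k ≤ extOp pbar p i)) ∧
    ∃ j : Option (Fin I), extOp x0 x j = 0 ∧
      (∀ k : Option (Fin I), extOp x0 x k = 0 → extOp pbar p j ≤ extOp pbar p k) ∧
      c = extOp pbar p j)

/-!
Merit-order optimality is a linear program over the suppliers and the operator, so an optimal
allocation admits no improving exchange: if `a` is served and `b` has slack, then `a` bids at most
what `b` bids. Consequently every clearing price is at most the bid of any index with slack.

At the profile, the zero-price suppliers of `S` exactly cover `D`; any positive-price index that
were served would leave one of them with slack, so `S` is filled, everyone else gets nothing,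
`j` has slack, and the price is `p j`. After a deviation by `i`, either some other member of `S`
keeps slack and the price is `0`, or `S \ {i}` is full, which forces `i ∈ S`, serves `i` at most
`q i` and leaves slack at `j`, so the price is at most `p j`. Finally `q i ≤ y*(p j)` makes
`R(·; p j)` nondecreasing on `[0, q i]`.
-/

section Allocation

variable {ι : Type*} [Fintype ι]

def feasibleAllocs (cap : ι → ℝ) (D : ℝ) : Set (ι → ℝ) :=
  {y | (∀ o, 0 ≤ y o ∧ y o ≤ cap o) ∧ ∑ o, y o = D}

variable {w cap x : ι → ℝ} {D : ℝ}

/-- Moving `min (x a) (cap b - x b)` units from `a` to `b` stays feasible and changes the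
objective by that amount times `w b - w a`. -/
theorem weight_le_of_isMaxOn [DecidableEq ι] (hx : x ∈ feasibleAllocs cap D)
    (hmax : IsMaxOn (fun y => ∑ o, w o * y o) (feasibleAllocs cap D) x)
    {a b : ι} (hab : a ≠ b) (ha : 0 < x a) (hb : x b < cap b) : w b ≤ w a := by
  set ε := min (x a) (cap b - x b)
  have hε : 0 < ε := lt_min ha (sub_pos.2 hb)
  have hεa : ε ≤ x a := min_le_left _ _
  have hεb : ε ≤ cap b - x b := min_le_right _ _
  set y := x + Pi.single b ε - Pi.single a ε
  have hy : y ∈ feasibleAllocs cap D := by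
    refine ⟨fun o => ?_, ?_⟩
    · obtain ⟨h0, hcap⟩ := hx.1 o
      rcases eq_or_ne o a with rfl | hoa
      · simp only [y, Pi.sub_apply, Pi.add_apply, Pi.single_eq_same, Pi.single_eq_of_ne hab]
        constructor <;> linarith
      rcases eq_or_ne o b with rfl | hob
      · simp only [y, Pi.sub_apply, Pi.add_apply, Pi.single_eq_same, Pi.single_eq_of_ne hoa]
        constructor <;> linarith
      · simp only [y, Pi.sub_apply, Pi.add_apply, Pi.single_eq_of_ne hoa, Pi.single_eq_of_ne hob]
        constructor <;> linarith
    · simp [y, Finset.sum_sub_distrib, Finset.sum_add_distrib, hx.2]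
  have hle := isMaxOn_iff.1 hmax y hy
  simp only [y, Pi.sub_apply, Pi.add_apply, mul_sub, mul_add, Finset.sum_sub_distrib,
    Finset.sum_add_distrib, Pi.single_apply, mul_ite, mul_zero, Finset.sum_ite_eq',
    Finset.mem_univ, if_true] at hle
  nlinarith

theorem exists_lt_cap_of_lt (hx : x ∈ feasibleAllocs cap D) {T : Finset ι} {k : ι}
    (hk : k ∉ T) (hlt : D < ∑ o ∈ T, cap o + x k) : ∃ o ∈ T, x o < cap o := by
  by_contra! hfull
  have hsum : ∑ o ∈ T.cons k hk, x o ≤ D :=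
    hx.2 ▸ Finset.sum_le_univ_sum_of_nonneg fun o => (hx.1 o).1
  rw [Finset.sum_cons,
    Finset.sum_congr rfl fun o ho => le_antisymm (hx.1 o).2 (hfull o ho)] at hsum
  linarith

end Allocation

section Market

variable {I : ℕ} {pbar D : ℝ} {p q : Fin I → ℝ} {x0 c : ℝ} {x : Fin I → ℝ}

@[simp] theorem extOp_none (a0 : ℝ) (a : Fin I → ℝ) : extOp a0 a none = a0 := rfl

@[simp] theorem extOp_some (a0 : ℝ) (a : Fin I → ℝ) (i : Fin I) : extOp a0 a (some i) = a i :=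
  rfl

theorem MeritOpt.mem_feasibleAllocs (h : MeritOpt pbar D p q x0 x) :
    extOp x0 x ∈ feasibleAllocs (extOp D q) D := by
  obtain ⟨⟨h0, hD, hx, hsum⟩, -⟩ := h
  refine ⟨fun o => ?_, by rw [Fintype.sum_option]; exact hsum⟩
  cases o with
  | none => exact ⟨h0, hD⟩
  | some i => exact hx i

theorem MeritOpt.isMaxOn (h : MeritOpt pbar D p q x0 x) :
    IsMaxOn (fun y => ∑ o, (pbar - extOp pbar p o) * y o) (feasibleAllocs (extOp D q) D)
      (extOp x0 x) := by
  refine isMaxOn_iff.2 fun y ⟨hy, hsum⟩ => ?_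
  simp only [Fintype.sum_option, extOp_none, extOp_some] at hsum ⊢
  exact h.2 (y none) (fun i => y (some i)) (hy none).1 (hy none).2 (fun i => hy (some i)) hsum

theorem MeritOpt.price_le_of_lt (h : MeritOpt pbar D p q x0 x) {a b : Option (Fin I)}
    (hab : a ≠ b) (ha : 0 < extOp x0 x a) (hb : extOp x0 x b < extOp D q b) :
    extOp pbar p a ≤ extOp pbar p b := by
  have := weight_le_of_isMaxOn h.mem_feasibleAllocs h.isMaxOn hab ha hb
  linarith

theorem MeritOpt.exists_lt_of_lt (h : MeritOpt pbar D p q x0 x) {T : Finset (Fin I)}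
    {k : Option (Fin I)} (hk : ∀ m ∈ T, some m ≠ k) (hlt : D < ∑ m ∈ T, q m + extOp x0 x k) :
    ∃ m ∈ T, x m < q m := by
  have hkT : k ∉ T.map Function.Embedding.some := by simpa using hk
  obtain ⟨o, ho, hlt'⟩ := exists_lt_cap_of_lt h.mem_feasibleAllocs hkT (by rwa [Finset.sum_map])
  obtain ⟨m, hm, rfl⟩ := Finset.mem_map.1 ho
  exact ⟨m, hm, hlt'⟩

theorem MeritOpt.clearingPrice_le (h : MeritOpt pbar D p q x0 x)
    (hc : IsClearingPrice pbar D p q x0 x c) {m : Option (Fin I)}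
    (hm : extOp x0 x m < extOp D q m) : c ≤ extOp pbar p m := by
  have hbelow : ∀ k, 0 < extOp x0 x k → extOp pbar p k ≤ extOp pbar p m := fun k hk => by
    rcases eq_or_ne k m with rfl | hkm
    · exact le_rfl
    · exact h.price_le_of_lt hkm hk hm
  rcases hc with ⟨i, hi, -, -, rfl⟩ | ⟨hnone, j, -, hjmin, rfl⟩
  · exact hbelow i hi
  · rcases (h.mem_feasibleAllocs.1 m).1.eq_or_lt with h0 | hpos
    · exact hjmin m h0.symm
    · exact absurd ⟨m, hpos, hm, hbelow⟩ hnone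

theorem IsClearingPrice.ge_of_forall {L : ℝ} (hc : IsClearingPrice pbar D p q x0 x c)
    (hpartial : ∀ k, 0 < extOp x0 x k → extOp x0 x k < extOp D q k → L ≤ extOp pbar p k)
    (hzero : ∀ k, extOp x0 x k = 0 → L ≤ extOp pbar p k) : L ≤ c := by
  rcases hc with ⟨i, hi, hiq, -, rfl⟩ | ⟨-, j, hj, -, rfl⟩
  exacts [hpartial i hi hiq, hzero j hj]

end Market

section Equilibrium

variable {I : ℕ} {pbar D : ℝ} {p q : Fin I → ℝ} {x0 c : ℝ} {x : Fin I → ℝ}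
  {S : Finset (Fin I)} {j : Fin I}

theorem MeritOpt.eq_profile (h : MeritOpt pbar D p q x0 x) (hpbar : 0 < pbar)
    (hpS : ∀ i ∈ S, p i = 0) (hqsum : ∑ i ∈ S, q i = D) (hpout : ∀ k, k ∉ S → 0 < p k) :
    (∀ i ∈ S, x i = q i) ∧ (∀ k, k ∉ S → x k = 0) ∧ x0 = 0 := by
  have hzero : ∀ k : Option (Fin I), (∀ m ∈ S, some m ≠ k) → extOp x0 x k = 0 := by
    intro k hk
    refine le_antisymm (not_lt.1 fun hpos => ?_) (h.mem_feasibleAllocs.1 k).1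
    obtain ⟨m, hm, hlt⟩ := h.exists_lt_of_lt hk (by rw [hqsum]; linarith)
    have hle := h.price_le_of_lt (Ne.symm (hk m hm)) hpos (b := some m) hlt
    have hprice : 0 < extOp pbar p k := by
      cases k with
      | none => exact hpbar
      | some k => exact hpout k fun hkS => hk k hkS rfl
    rw [extOp_some, hpS m hm] at hle
    linarith
  have hx0 : x0 = 0 := hzero none (by simp)
  have hxout : ∀ k, k ∉ S → x k = 0 := fun k hk =>
    hzero (some k) fun m hm hmk => hk (Option.some_injective _ hmk ▸ hm)
  refine ⟨?_, hxout, hx0⟩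
  obtain ⟨⟨-, -, hbounds, hsum⟩, -⟩ := h
  have hsumS : ∑ i ∈ S, x i = ∑ i ∈ S, q i := by
    rw [hqsum, Finset.sum_subset (Finset.subset_univ S) fun k _ hk => hxout k hk, ← hsum,
      hx0, zero_add]
  exact (Finset.sum_eq_sum_iff_of_le fun i _ => (hbounds i).2).1 hsumS

theorem MeritOpt.clearingPrice_eq_of_profile (h : MeritOpt pbar D p q x0 x)
    (hc : IsClearingPrice pbar D p q x0 x c) (hxS : ∀ i ∈ S, x i = q i)
    (hxout : ∀ k, k ∉ S → x k = 0) (hx0 : x0 = 0) (hqS : ∀ i ∈ S, 0 < q i)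
    (hpj : p j ≤ pbar) (hj : j ∉ S) (hqj : 0 < q j) (hjmin : ∀ k, k ∉ S → p j ≤ p k) :
    c = p j := by
  refine le_antisymm ?_ ?_
  · exact h.clearingPrice_le hc (m := some j) (by simpa [hxout j hj] using hqj)
  refine hc.ge_of_forall (fun k hk hkq => ?_) fun k hk => ?_
  · exfalso
    cases k with
    | none => simp [hx0] at hk
    | some k =>
      by_cases hkS : k ∈ S
      · simp [hxS k hkS] at hkq
      · simp [hxout k hkS] at hk
  · cases k with
    | none => exact hpj
    | some k =>
      refine hjmin k fun hkS => (hqS k hkS).ne' ?_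
      simpa [hxS k hkS] using hk

theorem MeritOpt.deviation_clearingPrice {i : Fin I} {p' q' : ℝ}
    (h : MeritOpt pbar D (Function.update p i p') (Function.update q i q') x0 x)
    (hc : IsClearingPrice pbar D (Function.update p i p') (Function.update q i q') x0 x c)
    (hpS : ∀ i ∈ S, p i = 0) (hqsum : ∑ i ∈ S, q i = D) (hj : j ∉ S)
    (hqj : ∀ i ∈ S, q i ≤ q j) (hxi : 0 < x i) :
    c ≤ 0 ∨ (i ∈ S ∧ x i ≤ q i ∧ c ≤ p j) := by
  have hQ : ∀ m, m ≠ i → Function.update q i q' m = q m := fun m hm =>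
    Function.update_of_ne hm _ _
  have hsumQ : ∀ T : Finset (Fin I), i ∉ T →
      ∑ m ∈ T, Function.update q i q' m = ∑ m ∈ T, q m :=
    fun T hiT => Finset.sum_congr rfl fun m hm => hQ m (ne_of_mem_of_not_mem hm hiT)
  have hsome : ∀ T : Finset (Fin I), i ∉ T → ∀ m ∈ T, some m ≠ some i := fun T hiT m hm hmi =>
    hiT (Option.some_injective _ hmi ▸ hm)
  have hiS' : i ∉ S.erase i := Finset.notMem_erase i S
  by_cases hslack : ∃ m ∈ S.erase i, x m < Function.update q i q' m
  · obtain ⟨m, hm, hlt⟩ := hslack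
    have hmi := Finset.ne_of_mem_erase hm
    left
    simpa [hmi, hpS m (Finset.mem_of_mem_erase hm)] using h.clearingPrice_le hc (m := some m) hlt
  push Not at hslack
  have hiS : i ∈ S := by
    by_contra hiS
    obtain ⟨m, hm, hlt⟩ := h.exists_lt_of_lt (hsome S hiS)
      (by rw [hsumQ S hiS, hqsum, extOp_some]; linarith)
    exact (hslack m (Finset.mem_erase.2 ⟨ne_of_mem_of_not_mem hm hiS, hm⟩)).not_gt hlt
  have hsumErase : ∑ m ∈ S.erase i, Function.update q i q' m = D - q i := by
    rw [hsumQ _ hiS', Finset.sum_erase_eq_sub hiS, hqsum]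
  have hxq : x i ≤ q i := by
    by_contra! hlt
    obtain ⟨m, hm, hmlt⟩ := h.exists_lt_of_lt (hsome _ hiS')
      (by rw [hsumErase, extOp_some]; linarith)
    exact (hslack m hm).not_gt hmlt
  have hji : j ≠ i := (ne_of_mem_of_not_mem hiS hj).symm
  have hxj : x j < q j := by
    have hiT : i ∉ insert j (S.erase i) := by simp [hji.symm]
    have hjT : j ∉ S.erase i := fun hjS => hj (Finset.mem_of_mem_erase hjS)
    obtain ⟨m, hm, hmlt⟩ := h.exists_lt_of_lt (hsome _ hiT)
      (by rw [Finset.sum_insert hjT, hsumErase, hQ j hji, extOp_some]; linarith [hqj i hiS])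
    rcases Finset.mem_insert.1 hm with rfl | hm
    · rwa [hQ m hji] at hmlt
    · exact absurd hmlt (hslack m hm).not_gt
  right
  refine ⟨hiS, hxq, ?_⟩
  simpa [hji] using h.clearingPrice_le hc (m := some j) (by simpa [hji] using hxj)

end Equilibrium

section Profit

variable {Ω : Type*} [MeasurableSpace Ω] {μ : Measure Ω} {X : Ω → ℝ} {lam pr : ℝ}

theorem integrable_shortfall [IsFiniteMeasure μ] (hX : Measurable X) (hXnn : ∀ ω, 0 ≤ X ω)
    (a : ℝ) : Integrable (fun ω => max (a - X ω) 0) μ := by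
  refine (integrable_const (max a 0)).mono'
    ((measurable_const.sub hX).max measurable_const).aestronglyMeasurable
    (Filter.Eventually.of_forall fun ω => ?_)
  rw [Real.norm_of_nonneg (le_max_right _ _)]
  exact max_le_max_right 0 (by linarith [hXnn ω])

theorem integral_shortfall_sub_le [IsFiniteMeasure μ] (hX : Measurable X)
    (hXnn : ∀ ω, 0 ≤ X ω) {a b : ℝ} (hab : a ≤ b) :
    ∫ ω, max (b - X ω) 0 ∂μ - ∫ ω, max (a - X ω) 0 ∂μ ≤ (b - a) * cdfOf μ X b := by
  have hs : MeasurableSet {ω | X ω ≤ b} := hX measurableSet_Iic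
  rw [← integral_sub (integrable_shortfall hX hXnn b) (integrable_shortfall hX hXnn a)]
  calc ∫ ω, (max (b - X ω) 0 - max (a - X ω) 0) ∂μ
      ≤ ∫ ω, {ω | X ω ≤ b}.indicator (fun _ => b - a) ω ∂μ := by
        refine integral_mono ((integrable_shortfall hX hXnn b).sub
          (integrable_shortfall hX hXnn a)) ((integrable_const _).indicator hs) fun ω => ?_
        by_cases hω : X ω ≤ b
        · rw [indicator_of_mem (show ω ∈ {ω | X ω ≤ b} from hω), max_eq_left (by linarith)]
          linarith [le_max_left (a - X ω) 0]
        · rw [indicator_of_notMem (show ω ∉ {ω | X ω ≤ b} from hω),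
            max_eq_right (by linarith), max_eq_right (by linarith), sub_self]
    _ = (b - a) * cdfOf μ X b := by
        rw [integral_indicator_const _ hs, smul_eq_mul, mul_comm]
        rfl

theorem profit_zero (hXnn : ∀ ω, 0 ≤ X ω) : profit μ X lam pr 0 = 0 := by
  have hzero : (fun ω => max (0 - X ω) 0) = fun _ => (0 : ℝ) :=
    funext fun ω => max_eq_right (by linarith [hXnn ω])
  rw [profit, hzero, integral_zero, zero_mul, mul_zero, sub_zero]

theorem profit_nonpos {x : ℝ} (hlam : 0 ≤ lam) (hpr : pr ≤ 0) (hx : 0 ≤ x) :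
    profit μ X lam pr x ≤ 0 := by
  have hpen : 0 ≤ lam * ∫ ω, max (x - X ω) 0 ∂μ :=
    mul_nonneg hlam (integral_nonneg fun ω => le_max_right _ _)
  have hpay : x * pr ≤ 0 := mul_nonpos_of_nonneg_of_nonpos hx hpr
  unfold profit
  linarith

theorem profit_mono_price {x pr' : ℝ} (hx : 0 ≤ x) (hpr : pr ≤ pr') :
    profit μ X lam pr x ≤ profit μ X lam pr' x := by
  unfold profit
  nlinarith

/-- The marginal expected penalty of raising the commitment from `a` to `b` is at most
`λ F(b)` per unit, which the price `pr` covers. -/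
theorem profit_le_profit [IsFiniteMeasure μ] (hX : Measurable X) (hXnn : ∀ ω, 0 ≤ X ω)
    (hlam : 0 ≤ lam) {a b : ℝ} (hab : a ≤ b) (hpr : lam * cdfOf μ X b ≤ pr) :
    profit μ X lam pr a ≤ profit μ X lam pr b := by
  have hpen := mul_le_mul_of_nonneg_left (integral_shortfall_sub_le (μ := μ) hX hXnn hab) hlam
  have hpay := mul_le_mul_of_nonneg_left hpr (sub_nonneg.2 hab)
  unfold profit
  nlinarith

end Profit

theorem le_of_le_geninv {F : ℝ → ℝ} {u t : ℝ} (hF : ContinuousWithinAt F (Iio t) t)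
    (ht : 0 < t) (h : t ≤ geninv F u) : F t ≤ u := by
  have hbelow : ∀ s ∈ Ioo 0 t, F s ≤ u := fun s hs => le_of_not_ge fun hus =>
    (h.trans (csInf_le ⟨0, fun _ hr => hr.1⟩ ⟨hs.1.le, hus⟩)).not_gt hs.2
  exact le_of_tendsto hF (Filter.mem_of_superset (Ioo_mem_nhdsLT ht) hbelow)

theorem mul_le_of_le_ystar {F : ℝ → ℝ} {lam pr t : ℝ} (hF : ContinuousWithinAt F (Iio t) t)
    (hlam : 0 < lam) (ht : 0 < t) (h : t ≤ ystar F lam pr) : lam * F t ≤ pr :=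
  (le_div_iff₀' hlam).1 ((le_of_le_geninv hF ht h).trans (min_le_left _ _))

theorem up_general_alternative_equilibrium_general
    {Ω : Type*} [MeasurableSpace Ω] (μ : Measure Ω) [IsProbabilityMeasure μ]
    (I : ℕ)
    (X : Fin I → Ω → ℝ) (hX : ∀ i, Measurable (X i)) (hXnn : ∀ i ω, 0 ≤ X i ω)
    (hFc : ∀ i, Continuous (cdfOf μ (X i)))
    (lam : ℝ) (hlam : 0 < lam) (pbar : ℝ) (hpbar : 0 < pbar)
    (D : ℝ)
    (S : Finset (Fin I))
    (p q : Fin I → ℝ)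
    (hpS : ∀ i ∈ S, p i = 0) (hqS : ∀ i ∈ S, 0 < q i)
    (hqsum : ∑ i ∈ S, q i = D)
    (hpout : ∀ k, k ∉ S → 0 < p k ∧ p k ≤ pbar) (hqout : ∀ k, k ∉ S → 0 < q k)
    (j : Fin I) (hj : j ∉ S) (hjmin : ∀ k, k ∉ S → p j ≤ p k)
    (hqy : ∀ i ∈ S, q i ≤ ystar (cdfOf μ (X i)) lam (p j))
    (hqj : ∀ i ∈ S, q i ≤ q j) :
    -- at the profile, each `i ∈ S` is committed to `q i`, each `k ∉ S` to `0`, the lost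
    -- load is `0`, and the clearing price is `p j`
    (∀ (x0 : ℝ) (x : Fin I → ℝ), MeritOpt pbar D p q x0 x →
      (∀ i ∈ S, x i = q i) ∧ (∀ k, k ∉ S → x k = 0) ∧ x0 = 0 ∧
      ∀ c : ℝ, IsClearingPrice pbar D p q x0 x c → c = p j) ∧
    -- no unilateral deviation is profitable: each `i ∈ S` earns `Rᵢ(qᵢ; p j)` and each
    -- `k ∉ S` earns `0` at the profile
    (∀ (i : Fin I) (p' q' : ℝ), 0 ≤ p' → p' ≤ pbar → 0 ≤ q' →
      ∀ (x0 : ℝ) (x : Fin I → ℝ),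
        MeritOpt pbar D (Function.update p i p') (Function.update q i q') x0 x →
        ∀ c : ℝ, IsClearingPrice pbar D (Function.update p i p')
          (Function.update q i q') x0 x c →
          profit μ (X i) lam c (x i)
            ≤ (if i ∈ S then profit μ (X i) lam (p j) (q i) else 0)) := by
  refine ⟨fun x0 x h => ?_, fun i p' q' _ _ _ x0 x h c hc => ?_⟩
  · obtain ⟨hxS, hxout, hx0⟩ := h.eq_profile hpbar hpS hqsum fun k hk => (hpout k hk).1
    exact ⟨hxS, hxout, hx0, fun c hc => h.clearingPrice_eq_of_profile hc hxS hxout hx0 hqS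
      (hpout j hj).2 hj (hqout j hj) hjmin⟩
  have hmono : ∀ i ∈ S, ∀ a ≤ q i, profit μ (X i) lam (p j) a ≤ profit μ (X i) lam (p j) (q i) :=
    fun i hi a ha => profit_le_profit (hX i) (hXnn i) hlam.le ha
      (mul_le_of_le_ystar (hFc i).continuousWithinAt hlam (hqS i hi) (hqy i hi))
  have hpayoff : 0 ≤ if i ∈ S then profit μ (X i) lam (p j) (q i) else 0 := by
    split_ifs with hiS
    · simpa [profit_zero (hXnn i)] using hmono i hiS 0 (hqS i hiS).le
    · exact le_rfl
  have hxi : 0 ≤ x i := (h.mem_feasibleAllocs.1 (some i)).1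
  rcases hxi.eq_or_lt with hx | hx
  · rwa [← hx, profit_zero (hXnn i)]
  rcases h.deviation_clearingPrice hc hpS hqsum hj hqj hx with hc0 | ⟨hiS, hxq, hcj⟩
  · exact (profit_nonpos hlam.le hc0 hx.le).trans hpayoff
  · rw [if_pos hiS]
    exact (profit_mono_price hx.le hcj).trans (hmono i hiS _ hxq)

/-- Proposition 5 (alternative Nash equilibrium under generalized uniform pricing): let
`S = 𝓘^γ` be a nonempty proper subset of suppliers bidding price `0` with total quantity
`D`, let every supplier outside `S` bid a positive price (at most `p̄`) and positive
quantity, let `j ∉ S` attain the minimum price outside `S`, and suppose `qᵢ* ≤ yᵢ*(p_j*)`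
and `qᵢ* ≤ q_j*` for all `i ∈ S`.  Then the profile is a pure Nash equilibrium with
clearing price `p_j*`: every merit-order-optimal allocation commits each `i ∈ S` to `qᵢ*`
(earning `Rᵢ(qᵢ*; p_j*)`) and each `k ∉ S` to `0` (earning `0`), the pricing rule yields
`p_j*`, and no unilateral deviation `(p', q') ∈ [0, p̄] × [0, ∞)` yields a larger payoff
for any merit-order-optimal allocation and clearing price after the deviation. -/
theorem up_general_alternative_equilibrium
    {Ω : Type*} [MeasurableSpace Ω] (μ : Measure Ω) [IsProbabilityMeasure μ]
    (I : ℕ) (hI : 2 ≤ I)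
    (X : Fin I → Ω → ℝ) (hX : ∀ i, Measurable (X i)) (hXnn : ∀ i ω, 0 ≤ X i ω)
    (Xbar : Fin I → ℝ) (hXbar : ∀ i, 0 < Xbar i)
    (hsupp : ∀ i, μ {ω | X i ω ≤ Xbar i} = 1)
    (hFc : ∀ i, Continuous (cdfOf μ (X i)))
    (hF0 : ∀ i, cdfOf μ (X i) 0 = 0) (hF1 : ∀ i, cdfOf μ (X i) (Xbar i) = 1)
    (lam : ℝ) (hlam : 0 < lam) (pbar : ℝ) (hpbar : 0 < pbar)
    (D : ℝ) (hD : 0 < D)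
    (S : Finset (Fin I)) (hSne : S.Nonempty) (hSproper : S ≠ Finset.univ)
    (p q : Fin I → ℝ)
    (hpS : ∀ i ∈ S, p i = 0) (hqS : ∀ i ∈ S, 0 < q i)
    (hqsum : ∑ i ∈ S, q i = D)
    (hpout : ∀ k, k ∉ S → 0 < p k ∧ p k ≤ pbar) (hqout : ∀ k, k ∉ S → 0 < q k)
    (j : Fin I) (hj : j ∉ S) (hjmin : ∀ k, k ∉ S → p j ≤ p k)
    (hqy : ∀ i ∈ S, q i ≤ ystar (cdfOf μ (X i)) lam (p j))
    (hqj : ∀ i ∈ S, q i ≤ q j) :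
    -- at the profile, each `i ∈ S` is committed to `q i`, each `k ∉ S` to `0`, the lost
    -- load is `0`, and the clearing price is `p j`
    (∀ (x0 : ℝ) (x : Fin I → ℝ), MeritOpt pbar D p q x0 x →
      (∀ i ∈ S, x i = q i) ∧ (∀ k, k ∉ S → x k = 0) ∧ x0 = 0 ∧
      ∀ c : ℝ, IsClearingPrice pbar D p q x0 x c → c = p j) ∧
    -- no unilateral deviation is profitable: each `i ∈ S` earns `Rᵢ(qᵢ; p j)` and each
    -- `k ∉ S` earns `0` at the profile
    (∀ (i : Fin I) (p' q' : ℝ), 0 ≤ p' → p' ≤ pbar → 0 ≤ q' →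
      ∀ (x0 : ℝ) (x : Fin I → ℝ),
        MeritOpt pbar D (Function.update p i p') (Function.update q i q') x0 x →
        ∀ c : ℝ, IsClearingPrice pbar D (Function.update p i p')
          (Function.update q i q') x0 x c →
          profit μ (X i) lam c (x i)
            ≤ (if i ∈ S then profit μ (X i) lam (p j) (q i) else 0)) :=
  up_general_alternative_equilibrium_general μ I X hX hXnn hFc lam hlam pbar hpbar D S p q hpS hqS
    hqsum hpout hqout j hj hjmin hqy hqj
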